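/- Let E be an Archimedean ordered real vector space with order unit e, let π : E → C(H_e) be the representation π(x)(f) = f(x), and define p(x) := ‖π(x)‖ (sup norm). Then p is a norm on E. -/

import Mathlib

variable {E : Type*} [AddCommGroup E] [PartialOrder E] [IsOrderedAddMonoid E] [Module ℝ E]
  [PosSMulStrictMono ℝ E]

/-- An order unit of an ordered real vector space. -/
def IsOrderUnit (e : E) : Prop :=
  0 < e ∧ ∀ x : E, ∃ l : ℝ, 0 < l ∧ x ≤ l • e

/-- `H_e`: the positive linear functionals normalized at the order unit `e`. -/
def He (e : E) : Set (E →ₗ[ℝ] ℝ) :=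
  {f | (∀ x : E, 0 ≤ x → 0 ≤ f x) ∧ f e = 1}

/-- The sup norm of the representation `π(x)`: `p(x) = sup {|f(x)| : f ∈ H_e}`. -/
noncomputable def pnorm (e : E) (x : E) : ℝ :=
  ⨆ f : He e, |(f : E →ₗ[ℝ] ℝ) x|

/-- The order-unit "upper gauge": `oq e x = inf {l : ℝ | x ≤ l • e}`. -/
noncomputable def oq (e x : E) : ℝ := sInf {l : ℝ | x ≤ l • e}

section auxlemmas

variable {e : E}

lemma nonneg_of_smul_e (he : IsOrderUnit e) {c : ℝ} (h : 0 ≤ c • e) : 0 ≤ c := by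
  by_contra hc
  push_neg at hc
  have h1 : 0 ≤ (-c) • e := smul_nonneg (by linarith) he.1.le
  rw [neg_smul] at h1
  have h2 : c • e = 0 := le_antisymm (neg_nonneg.mp h1) h
  rcases smul_eq_zero.mp h2 with h3 | h3
  · exact absurd h3 (by intro h4; linarith)
  · exact absurd h3 (ne_of_gt he.1)

lemma oq_set_nonempty (he : IsOrderUnit e) (x : E) : {l : ℝ | x ≤ l • e}.Nonempty := by
  obtain ⟨l, _, hl⟩ := he.2 x
  exact ⟨l, hl⟩

lemma oq_set_bddBelow (he : IsOrderUnit e) (x : E) : BddBelow {l : ℝ | x ≤ l • e} := by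
  obtain ⟨l0, _, hl0⟩ := he.2 (-x)
  refine ⟨-l0, fun l hl => ?_⟩
  have h : 0 ≤ (l + l0) • e := by
    rw [add_smul]
    have := add_le_add hl hl0
    simpa using this
  have := nonneg_of_smul_e he h
  linarith

lemma oq_le (he : IsOrderUnit e) {x : E} {l : ℝ} (h : x ≤ l • e) : oq e x ≤ l :=
  csInf_le (oq_set_bddBelow he x) h

lemma le_oq (he : IsOrderUnit e) {x : E} {c : ℝ} (h : ∀ l : ℝ, x ≤ l • e → c ≤ l) :
    c ≤ oq e x :=
  le_csInf (oq_set_nonempty he x) h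

lemma oq_zero (he : IsOrderUnit e) : oq e (0 : E) = 0 := by
  refine le_antisymm (oq_le he (by simp)) (le_oq he fun l hl => ?_)
  exact nonneg_of_smul_e he (by simpa using hl)

lemma oq_add (he : IsOrderUnit e) (x y : E) : oq e (x + y) ≤ oq e x + oq e y := by
  have hkey : ∀ a : ℝ, x ≤ a • e → ∀ b : ℝ, y ≤ b • e → oq e (x + y) ≤ a + b := by
    intro a ha b hb
    exact oq_le he (by rw [add_smul]; exact add_le_add ha hb)
  have h3 : ∀ a : ℝ, x ≤ a • e → oq e (x + y) - a ≤ oq e y := fun a ha =>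
    le_oq he fun b hb => by linarith [hkey a ha b hb]
  have h4 : oq e (x + y) - oq e y ≤ oq e x := le_oq he fun a ha => by linarith [h3 a ha]
  linarith

lemma oq_smul (he : IsOrderUnit e) {c : ℝ} (hc : 0 < c) (x : E) :
    oq e (c • x) = c * oq e x := by
  refine le_antisymm ?_ ?_
  · have h1 : oq e (c • x) / c ≤ oq e x := by
      refine le_oq he fun l hl => ?_
      rw [div_le_iff₀ hc]
      have h2 : oq e (c • x) ≤ c * l := by
        refine oq_le he ?_
        rw [mul_smul]
        exact smul_le_smul_of_nonneg_left hl hc.le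
      linarith
    rw [div_le_iff₀ hc] at h1
    linarith
  · have h1 : ∀ l : ℝ, c • x ≤ l • e → oq e x ≤ c⁻¹ * l := by
      intro l hl
      refine oq_le he ?_
      have h2 := smul_le_smul_of_nonneg_left hl (inv_nonneg.mpr hc.le)
      rwa [smul_smul, smul_smul, inv_mul_cancel₀ hc.ne', one_smul] at h2
    refine le_oq he fun l hl => ?_
    have := h1 l hl
    have h3 : c * oq e x ≤ c * (c⁻¹ * l) := by
      exact mul_le_mul_of_nonneg_left this hc.le
    rw [← mul_assoc, mul_inv_cancel₀ hc.ne', one_mul] at h3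
    exact h3

lemma oq_neg_add_nonneg (he : IsOrderUnit e) (x : E) : 0 ≤ oq e x + oq e (-x) := by
  have := oq_add he x (-x)
  rw [add_neg_cancel, oq_zero he] at this
  linarith

lemma oq_e (he : IsOrderUnit e) : oq e e = 1 := by
  refine le_antisymm (oq_le he (by rw [one_smul])) (le_oq he fun l hl => ?_)
  have h : 0 ≤ (l - 1) • e := by
    rw [sub_smul, one_smul, sub_nonneg]; exact hl
  have := nonneg_of_smul_e he h
  linarith

lemma oq_neg_e (he : IsOrderUnit e) : oq e (-e) = -1 := by
  refine le_antisymm (oq_le he (by rw [neg_smul, one_smul])) (le_oq he fun l hl => ?_)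
  have h : 0 ≤ (l + 1) • e := by
    rw [add_smul, one_smul]
    have := add_le_add hl (le_refl e)
    simpa using this
  have := nonneg_of_smul_e he h
  linarith

lemma oq_nonpos_of_nonpos (he : IsOrderUnit e) {x : E} (hx : x ≤ 0) : oq e x ≤ 0 :=
  oq_le he (by simpa using hx)

/-- Key Hahn–Banach construction: for `x ≠ 0` there is a normalized positive functional
taking the value `oq e x` at `x`. -/
lemma exists_he_functional (he : IsOrderUnit e) (x : E) (hx : x ≠ 0) :
    ∃ g : E →ₗ[ℝ] ℝ, g ∈ He e ∧ g x = oq e x := by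
  -- partial linear map on span {x}
  set f : E →ₗ.[ℝ] ℝ := LinearPMap.mkSpanSingleton x (oq e x) hx with hf
  have hdom : ∀ z : f.domain, ∃ c : ℝ, c • x = (z : E) := by
    intro z
    have hz : (z : E) ∈ (Submodule.span ℝ {x} : Submodule ℝ E) := z.2
    exact Submodule.mem_span_singleton.mp hz
  have hle : ∀ z : f.domain, f z ≤ oq e (z : E) := by
    intro z
    obtain ⟨c, hc⟩ := hdom z
    have hz2 : (z : E) ∈ f.domain := z.2
    have happ : f z = c * oq e x := by
      have : z = ⟨c • x, hc ▸ hz2⟩ := Subtype.ext hc.symm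
      rw [this, LinearPMap.mkSpanSingleton'_apply]
      simp [smul_eq_mul]
    rw [happ, ← hc]
    rcases lt_trichotomy c 0 with h | h | h
    · have hq : oq e (c • x) = (-c) * oq e (-x) := by
        rw [show c • x = (-c) • (-x) by simp, oq_smul he (by linarith) (-x)]
      rw [hq]
      have h0 := oq_neg_add_nonneg he x
      nlinarith
    · subst h; simp [oq_zero he]
    · rw [oq_smul he h]
  obtain ⟨g, hg_eq, hg_le⟩ := exists_extension_of_le_sublinear f (oq e)
    (fun c hc y => oq_smul he hc y) (oq_add he) hle
  have hgx : g x = oq e x := by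
    have hmem : x ∈ f.domain := by
      rw [hf]; exact Submodule.mem_span_singleton_self x
    have := hg_eq ⟨x, hmem⟩
    rw [this]
    show f ⟨x, hmem⟩ = oq e x
    exact LinearPMap.mkSpanSingleton'_apply_self x (oq e x) _ _
  refine ⟨g, ⟨fun y hy => ?_, ?_⟩, hgx⟩
  · have h1 : g (-y) ≤ oq e (-y) := hg_le (-y)
    have h2 : oq e (-y) ≤ 0 := oq_nonpos_of_nonpos he (by simpa using hy)
    rw [map_neg] at h1
    linarith
  · have h1 : g e ≤ 1 := by have := hg_le e; rwa [oq_e he] at this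
    have h2 : g (-e) ≤ -1 := by have := hg_le (-e); rwa [oq_neg_e he] at this
    rw [map_neg] at h2
    linarith

lemma eq_zero_of_oq_nonpos
    (harch : ∀ y x : E, 0 ≤ x → (∀ n : ℕ, (n : ℝ) • y ≤ x) → y ≤ 0)
    (he : IsOrderUnit e) {x : E} (h1 : oq e x ≤ 0) (h2 : oq e (-x) ≤ 0) : x = 0 := by
  have key : ∀ y : E, oq e y ≤ 0 → y ≤ 0 := by
    intro y hy
    have heps : ∀ ε : ℝ, 0 < ε → y ≤ ε • e := by
      intro ε hε
      obtain ⟨l, hl, hlε⟩ := exists_lt_of_csInf_lt (oq_set_nonempty he y)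
        (lt_of_le_of_lt hy hε)
      calc y ≤ l • e := hl
        _ ≤ ε • e := by
          have : 0 ≤ (ε - l) • e := smul_nonneg (by linarith) he.1.le
          rw [sub_smul, sub_nonneg] at this
          exact this
    refine harch y e he.1.le fun n => ?_
    rcases Nat.eq_zero_or_pos n with hn | hn
    · subst hn; simpa using he.1.le
    · have hnpos : (0 : ℝ) < n := by exact_mod_cast hn
      have := heps ((n : ℝ)⁻¹) (by positivity)
      have h3 := smul_le_smul_of_nonneg_left this hnpos.le
      rwa [smul_smul, mul_inv_cancel₀ hnpos.ne', one_smul] at h3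
  have hx1 := key x h1
  have hx2 := key (-x) h2
  exact le_antisymm hx1 (neg_nonpos.mp hx2)

lemma he_nonempty (he : IsOrderUnit e) : (He e).Nonempty := by
  obtain ⟨g, hg, _⟩ := exists_he_functional he e (ne_of_gt he.1)
  exact ⟨g, hg⟩

lemma pnorm_bddAbove (he : IsOrderUnit e) (x : E) :
    BddAbove (Set.range fun f : He e => |(f : E →ₗ[ℝ] ℝ) x|) := by
  obtain ⟨l, _, hl⟩ := he.2 x
  obtain ⟨l', _, hl'⟩ := he.2 (-x)
  refine ⟨max l l', ?_⟩
  rintro _ ⟨⟨f, hfpos, hfe⟩, rfl⟩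
  have h1 : f x ≤ l := by
    have := hfpos (l • e - x) (by rwa [sub_nonneg])
    rw [map_sub, map_smul, hfe, smul_eq_mul, mul_one] at this
    linarith
  have h2 : -f x ≤ l' := by
    have := hfpos (l' • e - (-x)) (by rwa [sub_nonneg])
    rw [map_sub, map_neg, map_smul, hfe, smul_eq_mul, mul_one] at this
    linarith
  rw [abs_le]
  constructor
  · have := le_max_right l l'; linarith
  · have := le_max_left l l'; linarith

end auxlemmas

/-- for an Archimedean ordered real vector space `E` with order unit `e`,
the map `p(x) = ‖π(x)‖ = sup {|f(x)| : f ∈ H_e}` is a norm on `E`. -/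
theorem pnorm_is_norm
    (harch : ∀ y x : E, 0 ≤ x → (∀ n : ℕ, (n : ℝ) • y ≤ x) → y ≤ 0)
    (e : E) (he : IsOrderUnit e) :
    (∀ x : E, 0 ≤ pnorm e x) ∧
      (∀ x : E, pnorm e x = 0 ↔ x = 0) ∧
      (∀ (a : ℝ) (x : E), pnorm e (a • x) = |a| * pnorm e x) ∧
      (∀ x y : E, pnorm e (x + y) ≤ pnorm e x + pnorm e y) := by
  haveI : Nonempty (He e) := Set.Nonempty.to_subtype (he_nonempty he)
  have hnonneg : ∀ x : E, 0 ≤ pnorm e x := fun x =>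
    Real.iSup_nonneg fun f => abs_nonneg _
  have hzero : pnorm e (0 : E) = 0 := by
    unfold pnorm
    simp only [map_zero, abs_zero]
    exact ciSup_const
  have hle_pnorm : ∀ (x : E) (f : He e), |(f : E →ₗ[ℝ] ℝ).1 x| ≤ pnorm e x := by
    intro x f
    exact le_ciSup (pnorm_bddAbove he x) f
  have hdef : ∀ x : E, pnorm e x = 0 ↔ x = 0 := by
    intro x
    constructor
    · intro hp
      by_cases hx : x = 0
      · exact hx
      · have hfz : ∀ f : E →ₗ[ℝ] ℝ, f ∈ He e → f x = 0 := by
          intro f hf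
          have := hle_pnorm x ⟨f, hf⟩
          rw [hp] at this
          exact abs_eq_zero.mp (le_antisymm this (abs_nonneg _))
        obtain ⟨g1, hg1, hg1x⟩ := exists_he_functional he x hx
        obtain ⟨g2, hg2, hg2x⟩ := exists_he_functional he (-x) (neg_ne_zero.mpr hx)
        have h1 : oq e x ≤ 0 := by rw [← hg1x, hfz g1 hg1]
        have h2 : oq e (-x) ≤ 0 := by
          rw [← hg2x, map_neg, hfz g2 hg2, neg_zero]
        exact eq_zero_of_oq_nonpos harch he h1 h2
    · rintro rfl; exact hzero
  have hsmul_le : ∀ (b : ℝ) (y : E), pnorm e (b • y) ≤ |b| * pnorm e y := by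
    intro b y
    refine ciSup_le fun f => ?_
    rw [map_smul, smul_eq_mul, abs_mul]
    exact mul_le_mul_of_nonneg_left (hle_pnorm y f) (abs_nonneg b)
  have hsmul : ∀ (a : ℝ) (x : E), pnorm e (a • x) = |a| * pnorm e x := by
    intro a x
    rcases eq_or_ne a 0 with rfl | ha
    · simp [hzero]
    · refine le_antisymm (hsmul_le a x) ?_
      have h1 : pnorm e x ≤ |a⁻¹| * pnorm e (a • x) := by
        have := hsmul_le a⁻¹ (a • x)
        rwa [smul_smul, inv_mul_cancel₀ ha, one_smul] at this
      have h2 : |a| * pnorm e x ≤ |a| * (|a⁻¹| * pnorm e (a • x)) :=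
        mul_le_mul_of_nonneg_left h1 (abs_nonneg a)
      rwa [abs_inv, ← mul_assoc, mul_inv_cancel₀ (abs_ne_zero.mpr ha), one_mul] at h2
  refine ⟨hnonneg, hdef, hsmul, fun x y => ?_⟩
  refine ciSup_le fun f => ?_
  rw [map_add]
  exact (abs_add_le _ _).trans (add_le_add (hle_pnorm x f) (hle_pnorm y f))
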